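/- arXiv:1806.09717 — 2 statements merged into one kernel-verified Lean document; each statement's English description precedes it below -/
import Mathlib

section
/- For every integer n ≥ 3, the number p_{3×n} of multiple self-avoiding polygons in the 3×n grid satisfies 14·(7/2)^(n−3) − 1 ≤ p_{3×n} ≤ 14·(11/3)^(n−3) − 1. -/
/-- Adjacency in the `m × n` grid graph: two lattice points at Euclidean distance 1. -/
def gridAdj (m n : ℕ) (a b : Fin m × Fin n) : Prop :=
  (a.1 = b.1 ∧ ((a.2 : ℕ) + 1 = (b.2 : ℕ) ∨ (b.2 : ℕ) + 1 = (a.2 : ℕ))) ∨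
  (a.2 = b.2 ∧ ((a.1 : ℕ) + 1 = (b.1 : ℕ) ∨ (b.1 : ℕ) + 1 = (a.1 : ℕ)))

instance (m n : ℕ) (a b : Fin m × Fin n) : Decidable (gridAdj m n a b) := by
  unfold gridAdj; infer_instance

/-- The `m × n` grid graph on vertex set `{1,…,m} × {1,…,n}`. -/
def gridGraph (m n : ℕ) : SimpleGraph (Fin m × Fin n) where
  Adj := gridAdj m n
  symm := by constructor; intro a b h; unfold gridAdj at *; tauto
  loopless := by
    constructor; intro a h
    rcases h with ⟨_, h⟩ | ⟨_, h⟩ <;> omega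

instance (m n : ℕ) : DecidableRel (gridGraph m n).Adj :=
  fun a b => inferInstanceAs (Decidable (gridAdj m n a b))

/-- The set of multiple self-avoiding polygons in the `m × n` grid:
nonempty edge subsets of the grid graph in which every vertex has degree 0 or 2. -/
def msapFinset (m n : ℕ) : Finset (Finset (Sym2 (Fin m × Fin n))) :=
  ((gridGraph m n).edgeFinset.powerset).filter
    (fun S => S ≠ ∅ ∧ ∀ v : Fin m × Fin n,
      (S.filter (fun e => v ∈ e)).card = 0 ∨ (S.filter (fun e => v ∈ e)).card = 2)

/-- `p_{m×n}`, the number of multiple self-avoiding polygons in the `m × n` grid. -/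
def msapCount (m n : ℕ) : ℕ := (msapFinset m n).card

/-!
Transfer matrix argument. Cut the `3 × n` grid before its last column and record the set of rows
whose horizontal edge crosses the cut; the configurations with a prescribed crossing set `A` at
the right end satisfy a linear recursion in `n` whose coefficients count the ways to complete a
column. For three rows only the crossing sets `∅, {0,1}, {0,2}, {1,2}` occur, the counts for
`{0,2}` and `∅` (resp. `{1,2}` and `{0,1}`) agree, and the counts `e n` for `∅` (which is
`p_{3×n} + 1`, the `+ 1` being the empty edge set) and `g n` for `{0,1}` satisfy
`e (n+1) = 2 e n + 2 g n`, `g (n+1) = 2 e n + g n`, with `e 3 = 14`, `g 3 = 11`. The cone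
`3/4 ≤ g/e ≤ 5/6` is invariant under this recursion, so `e` grows by a factor between `7/2`
and `11/3` at each step.
-/

namespace MSAP
open Finset

/- Rows are `Fin (m + 1)`, so that the vertical edges of a column are indexed by `Fin m`.
A configuration "dangling at `A`" counts, at each vertex of the last column whose row is in `A`,
one extra edge leaving the grid to the right. -/
def danglingDeg {m n : ℕ} (A : Finset (Fin (m + 1))) (S : Finset (Sym2 (Fin (m + 1) × Fin n)))
    (v : Fin (m + 1) × Fin n) : ℕ :=
  #{e ∈ S | v ∈ e} + if (v.2 : ℕ) + 1 = n ∧ v.1 ∈ A then 1 else 0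

def danglingConfigs (m n : ℕ) (A : Finset (Fin (m + 1))) :
    Finset (Finset (Sym2 (Fin (m + 1) × Fin n))) :=
  {S ∈ (gridGraph (m + 1) n).edgeFinset.powerset |
    ∀ v, danglingDeg A S v = 0 ∨ danglingDeg A S v = 2}

theorem msapCount_add_one (m n : ℕ) : msapCount (m + 1) n + 1 = #(danglingConfigs m n ∅) := by
  have h : danglingConfigs m n ∅ = insert ∅ (msapFinset (m + 1) n) := by
    ext S
    by_cases hS : S = ∅
    · simp [hS, danglingConfigs, danglingDeg]
    · simp [hS, danglingConfigs, danglingDeg, msapFinset]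
  rw [h, card_insert_of_notMem (by simp [msapFinset]), msapCount]

def vertDeg {m : ℕ} (V : Finset (Fin m)) (i : Fin (m + 1)) : ℕ :=
  #{k ∈ V | i = k.castSucc ∨ i = k.succ}

/-- `B`: rows entering the last column from the left, `A`: rows leaving it to the right,
`V`: vertical edges used in it. -/
def ColumnCompatible {m : ℕ} (B A : Finset (Fin (m + 1))) (V : Finset (Fin m)) : Prop :=
  ∀ i, (if i ∈ B then 1 else 0) + (if i ∈ A then 1 else 0) + vertDeg V i = 0 ∨
    (if i ∈ B then 1 else 0) + (if i ∈ A then 1 else 0) + vertDeg V i = 2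

instance {m : ℕ} (B A : Finset (Fin (m + 1))) : DecidablePred (ColumnCompatible B A) :=
  fun _ => Fintype.decidableForallFintype

def transfer {m : ℕ} (B A : Finset (Fin (m + 1))) : ℕ := #{V | ColumnCompatible B A V}

section LastColumn
variable {m n : ℕ}

theorem gridGraph_adj {a b : Fin m × Fin n} : (gridGraph m n).Adj a b ↔ gridAdj m n a b :=
  Iff.rfl

def embed (m n : ℕ) : Fin (m + 1) × Fin (n + 1) ↪ Fin (m + 1) × Fin (n + 2) :=
  (Function.Embedding.refl _).prodMap Fin.castSuccEmb

def crossEdge (m n : ℕ) : Fin (m + 1) ↪ Sym2 (Fin (m + 1) × Fin (n + 2)) where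
  toFun i := s((i, (Fin.last n).castSucc), (i, Fin.last (n + 1)))
  inj' i j h := by simpa [Sym2.eq_iff, Fin.ext_iff] using h

def lastColEdge (m n : ℕ) : Fin m ↪ Sym2 (Fin (m + 1) × Fin (n + 2)) where
  toFun k := s((k.castSucc, Fin.last (n + 1)), (k.succ, Fin.last (n + 1)))
  inj' k l h := by
    simp only [Sym2.eq_iff, Prod.mk.injEq, Fin.ext_iff, Fin.val_castSucc, Fin.val_succ] at h
    omega

theorem embed_apply (w : Fin (m + 1) × Fin (n + 1)) : embed m n w = (w.1, w.2.castSucc) := rfl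

theorem crossEdge_apply (i : Fin (m + 1)) :
    crossEdge m n i = s((i, (Fin.last n).castSucc), (i, Fin.last (n + 1))) := rfl

theorem lastColEdge_apply (k : Fin m) :
    lastColEdge m n k = s((k.castSucc, Fin.last (n + 1)), (k.succ, Fin.last (n + 1))) := rfl

theorem embed_mem_map {w : Fin (m + 1) × Fin (n + 1)} {e : Sym2 (Fin (m + 1) × Fin (n + 1))} :
    embed m n w ∈ Sym2.map (embed m n) e ↔ w ∈ e := by
  simp [Sym2.mem_map]

theorem embed_mem_crossEdge {w : Fin (m + 1) × Fin (n + 1)} {i : Fin (m + 1)} :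
    embed m n w ∈ crossEdge m n i ↔ w = (i, Fin.last n) := by
  obtain ⟨j, c⟩ := w
  simp [crossEdge_apply, embed_apply, Fin.ext_iff, Fin.val_last, eq_comm]
  omega

theorem embed_notMem_lastColEdge (w : Fin (m + 1) × Fin (n + 1)) (k : Fin m) :
    embed m n w ∉ lastColEdge m n k := by
  obtain ⟨j, c⟩ := w
  simp [lastColEdge_apply, embed_apply, Fin.ext_iff, Fin.val_last]
  omega

theorem last_notMem_map (i : Fin (m + 1)) (e : Sym2 (Fin (m + 1) × Fin (n + 1))) :
    (i, Fin.last (n + 1)) ∉ Sym2.map (embed m n) e := by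
  simp [Sym2.mem_map, embed_apply, Fin.ext_iff]
  omega

theorem last_mem_crossEdge {i j : Fin (m + 1)} :
    (i, Fin.last (n + 1)) ∈ crossEdge m n j ↔ j = i := by
  simp [crossEdge_apply, Fin.ext_iff, eq_comm]

theorem last_mem_lastColEdge {i : Fin (m + 1)} {k : Fin m} :
    (i, Fin.last (n + 1)) ∈ lastColEdge m n k ↔ i = k.castSucc ∨ i = k.succ := by
  simp [lastColEdge_apply]

theorem crossEdge_ne_map (i : Fin (m + 1)) (e : Sym2 (Fin (m + 1) × Fin (n + 1))) :
    crossEdge m n i ≠ Sym2.map (embed m n) e := fun h =>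
  last_notMem_map i e (h ▸ last_mem_crossEdge.2 rfl)

theorem lastColEdge_ne_map (k : Fin m) (e : Sym2 (Fin (m + 1) × Fin (n + 1))) :
    lastColEdge m n k ≠ Sym2.map (embed m n) e := fun h =>
  last_notMem_map k.succ e (h ▸ last_mem_lastColEdge.2 (Or.inr rfl))

theorem crossEdge_ne_lastColEdge (i : Fin (m + 1)) (k : Fin m) :
    crossEdge m n i ≠ lastColEdge m n k := fun h =>
  embed_notMem_lastColEdge (i, Fin.last n) k (h ▸ embed_mem_crossEdge.2 rfl)

theorem map_mem_edgeFinset_iff {e : Sym2 (Fin (m + 1) × Fin (n + 1))} :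
    Sym2.map (embed m n) e ∈ (gridGraph (m + 1) (n + 2)).edgeFinset ↔
      e ∈ (gridGraph (m + 1) (n + 1)).edgeFinset := by
  induction e using Sym2.ind with
  | _ a b => simp [gridGraph_adj, gridAdj, embed_apply, Fin.ext_iff]

theorem crossEdge_mem_edgeFinset (i : Fin (m + 1)) :
    crossEdge m n i ∈ (gridGraph (m + 1) (n + 2)).edgeFinset := by
  simp [crossEdge_apply, gridGraph_adj, gridAdj]

theorem lastColEdge_mem_edgeFinset (k : Fin m) :
    lastColEdge m n k ∈ (gridGraph (m + 1) (n + 2)).edgeFinset := by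
  simp [lastColEdge_apply, gridGraph_adj, gridAdj, Fin.ext_iff]

theorem forall_eq_embed_or_last {P : Fin (m + 1) × Fin (n + 2) → Prop} :
    (∀ x, P x) ↔ (∀ w, P (embed m n w)) ∧ ∀ i, P (i, Fin.last (n + 1)) := by
  simp only [Prod.forall, Fin.forall_fin_succ', embed_apply, forall_and]

theorem mem_edgeFinset_cases {e : Sym2 (Fin (m + 1) × Fin (n + 2))}
    (he : e ∈ (gridGraph (m + 1) (n + 2)).edgeFinset) :
    (∃ e', Sym2.map (embed m n) e' = e) ∨ (∃ i, crossEdge m n i = e) ∨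
      ∃ k, lastColEdge m n k = e := by
  induction e using Sym2.ind with
  | _ a b =>
    obtain ⟨i, j⟩ := a
    obtain ⟨i', j'⟩ := b
    simp only [SimpleGraph.mem_edgeFinset, SimpleGraph.mem_edgeSet, gridGraph_adj, gridAdj] at he
    induction j using Fin.lastCases with
    | cast c =>
      induction j' using Fin.lastCases with
      | cast c' => exact Or.inl ⟨s((i, c), (i', c')), rfl⟩
      | last =>
        obtain ⟨rfl, rfl⟩ : i = i' ∧ c = Fin.last n := by
          simp only [Fin.ext_iff, Fin.val_castSucc, Fin.val_last] at he ⊢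
          omega
        exact Or.inr (Or.inl ⟨i, rfl⟩)
    | last =>
      induction j' using Fin.lastCases with
      | cast c' =>
        obtain ⟨rfl, rfl⟩ : i = i' ∧ c' = Fin.last n := by
          simp only [Fin.ext_iff, Fin.val_castSucc, Fin.val_last] at he ⊢
          omega
        exact Or.inr (Or.inl ⟨i, Sym2.eq_swap⟩)
      | last =>
        have hv : (i : ℕ) + 1 = i' ∨ (i' : ℕ) + 1 = i := by
          simp only [Fin.ext_iff] at he
          omega
        refine Or.inr (Or.inr ?_)
        rcases hv with h | h
        · exact ⟨⟨i, by omega⟩, by simp [lastColEdge_apply, h]⟩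
        · exact ⟨⟨i', by omega⟩, by simp [lastColEdge_apply, Sym2.eq_swap, h]⟩

def glue (B : Finset (Fin (m + 1))) (V : Finset (Fin m))
    (R : Finset (Sym2 (Fin (m + 1) × Fin (n + 1)))) : Finset (Sym2 (Fin (m + 1) × Fin (n + 2))) :=
  R.map (embed m n).sym2Map ∪ B.map (crossEdge m n) ∪ V.map (lastColEdge m n)

variable {B : Finset (Fin (m + 1))} {V : Finset (Fin m)}
  {R : Finset (Sym2 (Fin (m + 1) × Fin (n + 1)))}

theorem card_filter_glue (p : Sym2 (Fin (m + 1) × Fin (n + 2)) → Prop) [DecidablePred p] :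
    #{e ∈ glue B V R | p e} =
      #{e ∈ R | p (Sym2.map (embed m n) e)} + #{i ∈ B | p (crossEdge m n i)} +
        #{k ∈ V | p (lastColEdge m n k)} := by
  have hRB : Disjoint (R.map (embed m n).sym2Map) (B.map (crossEdge m n)) := by
    simp only [disjoint_left, mem_map]
    rintro _ ⟨e, -, rfl⟩ ⟨i, -, h⟩
    exact crossEdge_ne_map i e h
  have hRV : Disjoint (R.map (embed m n).sym2Map) (V.map (lastColEdge m n)) := by
    simp only [disjoint_left, mem_map]
    rintro _ ⟨e, -, rfl⟩ ⟨k, -, h⟩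
    exact lastColEdge_ne_map k e h
  have hBV : Disjoint (B.map (crossEdge m n)) (V.map (lastColEdge m n)) := by
    simp only [disjoint_left, mem_map]
    rintro _ ⟨i, -, rfl⟩ ⟨k, -, h⟩
    exact crossEdge_ne_lastColEdge i k h.symm
  rw [glue, filter_union, filter_union, card_union_of_disjoint, card_union_of_disjoint,
    filter_map, filter_map, filter_map, card_map, card_map, card_map]
  · rfl
  · exact disjoint_filter_filter hRB
  · rw [← filter_union]
    exact disjoint_filter_filter (disjoint_union_left.2 ⟨hRV, hBV⟩)

theorem danglingDeg_glue_embed (A : Finset (Fin (m + 1))) (w : Fin (m + 1) × Fin (n + 1)) :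
    danglingDeg A (glue B V R) (embed m n w) = danglingDeg B R w := by
  rw [danglingDeg, danglingDeg, card_filter_glue]
  simp only [embed_mem_map, embed_mem_crossEdge, embed_notMem_lastColEdge, filter_false,
    card_empty, add_zero]
  obtain ⟨i, c⟩ := w
  by_cases hc : c = Fin.last n
  · subst hc
    simp [embed_apply, filter_eq, apply_ite card]
  · have hc' : (c : ℕ) ≠ n := fun h => hc (Fin.ext h)
    simp [embed_apply, hc, hc']
    omega

theorem danglingDeg_glue_last (A : Finset (Fin (m + 1))) (i : Fin (m + 1)) :
    danglingDeg A (glue B V R) (i, Fin.last (n + 1)) =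
      (if i ∈ B then 1 else 0) + (if i ∈ A then 1 else 0) + vertDeg V i := by
  rw [danglingDeg, card_filter_glue]
  simp only [last_notMem_map, last_mem_crossEdge, last_mem_lastColEdge, filter_false,
    card_empty, zero_add, filter_eq', vertDeg]
  simp [apply_ite card]
  omega

theorem glue_subset_edgeFinset_iff :
    glue B V R ⊆ (gridGraph (m + 1) (n + 2)).edgeFinset ↔
      R ⊆ (gridGraph (m + 1) (n + 1)).edgeFinset := by
  simp only [glue, union_subset_iff, map_subset_iff_subset_preimage]
  simp only [subset_iff, mem_preimage, Function.Embedding.sym2Map_apply, map_mem_edgeFinset_iff,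
    crossEdge_mem_edgeFinset, lastColEdge_mem_edgeFinset, implies_true, and_true]

theorem glue_mem_danglingConfigs_iff {A : Finset (Fin (m + 1))} :
    glue B V R ∈ danglingConfigs m (n + 2) A ↔
      R ∈ danglingConfigs m (n + 1) B ∧ ColumnCompatible B A V := by
  simp only [danglingConfigs, mem_filter, mem_powerset, glue_subset_edgeFinset_iff,
    forall_eq_embed_or_last (P := fun v => danglingDeg A (glue B V R) v = 0 ∨ _ = 2),
    danglingDeg_glue_embed, danglingDeg_glue_last, ColumnCompatible, and_assoc]

theorem map_mem_glue {e : Sym2 (Fin (m + 1) × Fin (n + 1))} :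
    Sym2.map (embed m n) e ∈ glue B V R ↔ e ∈ R := by
  simp [glue, crossEdge_ne_map, lastColEdge_ne_map,
    (Sym2.map.injective (embed m n).injective).eq_iff]

theorem crossEdge_mem_glue {i : Fin (m + 1)} : crossEdge m n i ∈ glue B V R ↔ i ∈ B := by
  simp [glue, fun e => (crossEdge_ne_map (m := m) (n := n) i e).symm,
    (crossEdge_ne_lastColEdge i _).symm]

theorem lastColEdge_mem_glue {k : Fin m} : lastColEdge m n k ∈ glue B V R ↔ k ∈ V := by
  simp [glue, fun e => (lastColEdge_ne_map (m := m) (n := n) k e).symm, crossEdge_ne_lastColEdge]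

def crossPart (S : Finset (Sym2 (Fin (m + 1) × Fin (n + 2)))) : Finset (Fin (m + 1)) :=
  {i | crossEdge m n i ∈ S}

def lastColPart (S : Finset (Sym2 (Fin (m + 1) × Fin (n + 2)))) : Finset (Fin m) :=
  {k | lastColEdge m n k ∈ S}

noncomputable def leftPart (S : Finset (Sym2 (Fin (m + 1) × Fin (n + 2)))) :
    Finset (Sym2 (Fin (m + 1) × Fin (n + 1))) :=
  S.preimage (Sym2.map (embed m n)) (Sym2.map.injective (embed m n).injective).injOn

theorem glue_parts {S : Finset (Sym2 (Fin (m + 1) × Fin (n + 2)))}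
    (hS : S ⊆ (gridGraph (m + 1) (n + 2)).edgeFinset) :
    glue (crossPart S) (lastColPart S) (leftPart S) = S := by
  ext e
  constructor
  · simp only [glue, mem_union, mem_map]
    rintro ((⟨e, he, rfl⟩ | ⟨i, hi, rfl⟩) | ⟨k, hk, rfl⟩)
    · simpa [leftPart] using he
    · simpa [crossPart] using hi
    · simpa [lastColPart] using hk
  · intro he
    rcases mem_edgeFinset_cases (hS he) with ⟨e, rfl⟩ | ⟨i, rfl⟩ | ⟨k, rfl⟩
    · simpa [map_mem_glue, leftPart] using he
    · simpa [crossEdge_mem_glue, crossPart] using he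
    · simpa [lastColEdge_mem_glue, lastColPart] using he

theorem crossPart_glue : crossPart (glue B V R) = B := by
  ext i; simp [crossPart, crossEdge_mem_glue]

theorem lastColPart_glue : lastColPart (glue B V R) = V := by
  ext k; simp [lastColPart, lastColEdge_mem_glue]

theorem leftPart_glue : leftPart (glue B V R) = R := by
  ext e; simp [leftPart, map_mem_glue]

end LastColumn

theorem card_danglingConfigs_add_two (m n : ℕ) (A : Finset (Fin (m + 1))) :
    #(danglingConfigs m (n + 2) A) =
      ∑ B, transfer B A * #(danglingConfigs m (n + 1) B) := by
  calc #(danglingConfigs m (n + 2) A)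
      = #(univ.sigma fun B => ({V | ColumnCompatible B A V} : Finset (Finset (Fin m))) ×ˢ
          danglingConfigs m (n + 1) B) := by
        refine card_nbij' (fun S => ⟨crossPart S, lastColPart S, leftPart S⟩)
          (fun p => glue p.1 p.2.1 p.2.2) ?_ ?_ ?_ ?_
        · intro S hS
          have hglue := glue_parts (mem_powerset.1 (mem_filter.1 hS).1)
          rw [mem_coe, ← hglue, glue_mem_danglingConfigs_iff] at hS
          simpa [and_comm] using hS
        · rintro ⟨B, V, R⟩ h
          simp only [mem_coe, mem_sigma, mem_product, mem_filter] at h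
          exact glue_mem_danglingConfigs_iff.2 ⟨h.2.2, h.2.1.2⟩
        · intro S hS
          exact glue_parts (mem_powerset.1 (mem_filter.1 hS).1)
        · rintro ⟨B, V, R⟩ -
          simp [crossPart_glue, lastColPart_glue, leftPart_glue]
    _ = ∑ B, transfer B A * #(danglingConfigs m (n + 1) B) := by
        simp [card_sigma, card_product, transfer]

theorem sum_transfer_mul_eq_sum {m : ℕ} {A : Finset (Fin (m + 1))}
    {s : Finset (Finset (Fin (m + 1)))} (h : ∀ B, transfer B A = if B ∈ s then 1 else 0)
    (f : Finset (Fin (m + 1)) → ℕ) : ∑ B, transfer B A * f B = ∑ B ∈ s, f B := by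
  simp [h, ite_mul, sum_ite_mem]

theorem card_danglingConfigs_one (A : Finset (Fin 3)) :
    #(danglingConfigs 2 1 A) = transfer ∅ A := by
  revert A; decide

theorem transfer_empty (B : Finset (Fin 3)) :
    transfer B ∅ =
      if B ∈ ({∅, {0, 1}, {0, 2}, {1, 2}} : Finset (Finset (Fin 3))) then 1 else 0 := by
  revert B; decide

theorem transfer_zero_one (B : Finset (Fin 3)) :
    transfer B {0, 1} =
      if B ∈ ({∅, {0, 1}, {0, 2}} : Finset (Finset (Fin 3))) then 1 else 0 := by
  revert B; decide

theorem transfer_one_two (B : Finset (Fin 3)) :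
    transfer B {1, 2} =
      if B ∈ ({∅, {0, 2}, {1, 2}} : Finset (Finset (Fin 3))) then 1 else 0 := by
  revert B; decide

theorem transfer_zero_two (B : Finset (Fin 3)) : transfer B {0, 2} = transfer B ∅ := by
  revert B; decide

theorem card_danglingConfigs_zero_two (n : ℕ) :
    #(danglingConfigs 2 (n + 1) {0, 2}) = #(danglingConfigs 2 (n + 1) ∅) := by
  cases n with
  | zero => rw [card_danglingConfigs_one, card_danglingConfigs_one, transfer_zero_two]
  | succ n => simp only [card_danglingConfigs_add_two, transfer_zero_two]

theorem card_danglingConfigs_zero_one_add_two (n : ℕ) :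
    #(danglingConfigs 2 (n + 2) {0, 1}) =
      2 * #(danglingConfigs 2 (n + 1) ∅) + #(danglingConfigs 2 (n + 1) {0, 1}) := by
  rw [card_danglingConfigs_add_two, sum_transfer_mul_eq_sum transfer_zero_one,
    sum_insert (by decide), sum_insert (by decide), sum_singleton, card_danglingConfigs_zero_two]
  ring

theorem card_danglingConfigs_one_two (n : ℕ) :
    #(danglingConfigs 2 (n + 1) {1, 2}) = #(danglingConfigs 2 (n + 1) {0, 1}) := by
  induction n with
  | zero => rw [card_danglingConfigs_one, card_danglingConfigs_one]; decide
  | succ n ih =>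
    rw [card_danglingConfigs_add_two, sum_transfer_mul_eq_sum transfer_one_two,
      sum_insert (by decide), sum_insert (by decide), sum_singleton, ih,
      card_danglingConfigs_zero_two, card_danglingConfigs_zero_one_add_two]
    ring

theorem card_danglingConfigs_empty_add_two (n : ℕ) :
    #(danglingConfigs 2 (n + 2) ∅) =
      2 * #(danglingConfigs 2 (n + 1) ∅) + 2 * #(danglingConfigs 2 (n + 1) {0, 1}) := by
  rw [card_danglingConfigs_add_two, sum_transfer_mul_eq_sum transfer_empty,
    sum_insert (by decide), sum_insert (by decide), sum_insert (by decide), sum_singleton,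
    card_danglingConfigs_zero_two, card_danglingConfigs_one_two]
  ring

theorem card_danglingConfigs_three :
    #(danglingConfigs 2 3 ∅) = 14 ∧ #(danglingConfigs 2 3 {0, 1}) = 11 := by
  have he : #(danglingConfigs 2 1 ∅) = 1 := by rw [card_danglingConfigs_one]; decide
  have hg : #(danglingConfigs 2 1 {0, 1}) = 1 := by rw [card_danglingConfigs_one]; decide
  simp only [card_danglingConfigs_empty_add_two, card_danglingConfigs_zero_one_add_two, he, hg]
  decide

theorem ratio_bounds_of_recurrence {e g : ℕ → ℕ} (he : ∀ k, e (k + 1) = 2 * e k + 2 * g k)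
    (hg : ∀ k, g (k + 1) = 2 * e k + g k) (h₀ : 3 * e 0 ≤ 4 * g 0 ∧ 6 * g 0 ≤ 5 * e 0)
    (k : ℕ) : 3 * e k ≤ 4 * g k ∧ 6 * g k ≤ 5 * e k := by
  induction k with
  | zero => exact h₀
  | succ k ih => rw [he, hg]; omega

theorem growth_bounds_of_recurrence {e g : ℕ → ℕ} (he : ∀ k, e (k + 1) = 2 * e k + 2 * g k)
    (hg : ∀ k, g (k + 1) = 2 * e k + g k) (h₀ : 3 * e 0 ≤ 4 * g 0 ∧ 6 * g 0 ≤ 5 * e 0)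
    (k : ℕ) :
    (e 0 : ℝ) * (7 / 2) ^ k ≤ e k ∧ (e k : ℝ) ≤ e 0 * (11 / 3) ^ k := by
  induction k with
  | zero => simp
  | succ k ih =>
    obtain ⟨hlow, hupp⟩ := ratio_bounds_of_recurrence he hg h₀ k
    have hlow' : (3 * e k : ℝ) ≤ 4 * g k := by exact_mod_cast hlow
    have hupp' : (6 * g k : ℝ) ≤ 5 * e k := by exact_mod_cast hupp
    rw [he, pow_succ, pow_succ]
    push_cast
    constructor <;> linarith [ih.1, ih.2]

end MSAP

/-- Bounds on the number of multiple self-avoiding polygons in the 3×n grid. -/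
theorem msap_three_by_n (n : ℕ) (hn : 3 ≤ n) :
    14 * ((7 : ℝ) / 2) ^ (n - 3) - 1 ≤ (msapCount 3 n : ℝ) ∧
    (msapCount 3 n : ℝ) ≤ 14 * ((11 : ℝ) / 3) ^ (n - 3) - 1 := by
  obtain ⟨k, rfl⟩ : ∃ k, n = k + 3 := ⟨n - 3, by omega⟩
  have hcount : (msapCount 3 (k + 3) : ℝ) + 1 = (MSAP.danglingConfigs 2 (k + 3) ∅).card := by
    exact_mod_cast MSAP.msapCount_add_one 2 (k + 3)
  obtain ⟨he₃, hg₃⟩ := MSAP.card_danglingConfigs_three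
  have hgrowth := MSAP.growth_bounds_of_recurrence
    (e := fun k => (MSAP.danglingConfigs 2 (k + 3) ∅).card)
    (g := fun k => (MSAP.danglingConfigs 2 (k + 3) {0, 1}).card)
    (fun k => MSAP.card_danglingConfigs_empty_add_two (k + 2))
    (fun k => MSAP.card_danglingConfigs_zero_one_add_two (k + 2))
    (by simp only [he₃, hg₃]; omega) k
  simp only [he₃, Nat.cast_ofNat] at hgrowth
  rw [Nat.add_sub_cancel]
  constructor <;> linarith [hgrowth.1, hgrowth.2]
end

section
/- For m, n ≥ 4 and any position (i,j) with predecessor a(i,j) in the antidiagonal order, the number of quasimosaics satisfies |Q_{a(i,j)}| ≤ |Q_{i,j}| ≤ 2·|Q_{a(i,j)}|; that is, every a(i,j)-quasimosaic extends to at least one and at most two (i,j)-quasimosaics. -/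
/-- The seven polygon mosaic tiles. -/
inductive Tile | T1 | T2 | T3 | T4 | T5 | T6 | T7
  deriving DecidableEq

instance instFintypeTile : Fintype Tile :=
  ⟨{.T1, .T2, .T3, .T4, .T5, .T6, .T7}, fun x => by cases x <;> simp⟩

/-- Connection point on the left edge. -/
def cpL : Tile → Bool
  | .T2 => true | .T5 => true | .T6 => true | _ => false

/-- Connection point on the top edge. -/
def cpT : Tile → Bool
  | .T4 => true | .T5 => true | .T7 => true | _ => false

/-- Connection point on the right edge. -/
def cpR : Tile → Bool
  | .T2 => true | .T3 => true | .T7 => true | _ => false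

/-- Connection point on the bottom edge. -/
def cpB : Tile → Bool
  | .T3 => true | .T4 => true | .T6 => true | _ => false

/-- Connection-point data (left, top, right, bottom) of a tile. -/
def cp (X : Tile) : Bool × Bool × Bool × Bool := (cpL X, cpT X, cpR X, cpB X)

/-- The antidiagonal order on positions: (a₁,a₂) comes no later than (b₁,b₂). -/
def ole (a b : ℕ × ℕ) : Prop :=
  a.1 + a.2 < b.1 + b.2 ∨ (a.1 + a.2 = b.1 + b.2 ∧ a.1 ≤ b.1)

/-- The strict antidiagonal order on positions. -/
def olt (a b : ℕ × ℕ) : Prop :=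
  a.1 + a.2 < b.1 + b.2 ∨ (a.1 + a.2 = b.1 + b.2 ∧ a.1 < b.1)

instance (a b : ℕ × ℕ) : Decidable (ole a b) := by unfold ole; infer_instance
instance (a b : ℕ × ℕ) : Decidable (olt a b) := by unfold olt; infer_instance

/-- The set of (r,c)-quasimosaics (0-based): assignments of tiles to all positions
up to and including (r,c) in the antidiagonal order which are suitably connected
and have no connection point on the boundary of the m×n array. -/
def Quasi (m n r c : ℕ) :
    Finset ({p : Fin m × Fin n // ole ((p.1 : ℕ), (p.2 : ℕ)) (r, c)} → Tile) :=
  Finset.univ.filter (fun M =>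
    (∀ p q, (p.1.1 : ℕ) = (q.1.1 : ℕ) ∧ (p.1.2 : ℕ) + 1 = (q.1.2 : ℕ) →
      cpR (M p) = cpL (M q)) ∧
    (∀ p q, (p.1.2 : ℕ) = (q.1.2 : ℕ) ∧ (p.1.1 : ℕ) + 1 = (q.1.1 : ℕ) →
      cpB (M p) = cpT (M q)) ∧
    (∀ p, ((p.1.2 : ℕ) = 0 → cpL (M p) = false) ∧
      ((p.1.2 : ℕ) = n - 1 → cpR (M p) = false) ∧
      ((p.1.1 : ℕ) = 0 → cpT (M p) = false) ∧
      ((p.1.1 : ℕ) = m - 1 → cpB (M p) = false)))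


/-!
Restriction maps `Q_{i,j}` onto `Q_{a(i,j)}`, and its fibres are the tiles that fit at `(i,j)`.
The tile there must carry the connection points prescribed by its left and top neighbours, which
allow at most two tiles; among these one avoids the right or the bottom boundary edge as required.
The only delicate cell is the corner `(m,n)`, which must avoid both, so its prescribed left and top
values have to agree. They do by parity: every tile has an even number of connection points, and
summing over all other cells, every matched edge is counted twice and the boundary contributes
nothing, leaving just the two edges that enter the corner.
-/

namespace Quasimosaic

open Finset

lemma ole_refl (x : ℕ × ℕ) : ole x x := Or.inr ⟨rfl, le_rfl⟩

lemma ole_trans {x y z : ℕ × ℕ} (hxy : ole x y) (hyz : ole y z) : ole x z := by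
  unfold ole at *; omega

lemma ole_of_olt {x y : ℕ × ℕ} (h : olt x y) : ole x y := by
  unfold ole olt at *; omega

lemma olt_of_not_ole {x y : ℕ × ℕ} (h : ¬ ole x y) : olt y x := by
  unfold ole olt at *; omega

lemma olt_of_ole_of_ne {x y : ℕ × ℕ} (h : ole x y) (hne : x ≠ y) : olt x y := by
  rw [Ne, Prod.ext_iff] at hne
  unfold ole olt at *; omega

/-- `a = a(b)` in the paper's notation. -/
structure IsPredecessor (m n : ℕ) (a b : ℕ × ℕ) : Prop where
  fst_lt : b.1 < m
  snd_lt : b.2 < n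
  lt : olt a b
  not_between : ∀ x : ℕ × ℕ, x.1 < m → x.2 < n → ¬(olt a x ∧ olt x b)

abbrev Cells (m n : ℕ) (c : ℕ × ℕ) : Type :=
  {p : Fin m × Fin n // ole ((p.1 : ℕ), (p.2 : ℕ)) c}

variable {m n : ℕ} {a b : ℕ × ℕ}

lemma Cells.ext_coe {c : ℕ × ℕ} {p q : Cells m n c}
    (h1 : (p.1.1 : ℕ) = q.1.1) (h2 : (p.1.2 : ℕ) = q.1.2) : p = q :=
  Subtype.ext (Prod.ext (Fin.ext h1) (Fin.ext h2))

namespace IsPredecessor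

lemma le (h : IsPredecessor m n a b) : ole a b := ole_of_olt h.lt

lemma ole_or_eq (h : IsPredecessor m n a b) {x : ℕ × ℕ} (hx1 : x.1 < m) (hx2 : x.2 < n)
    (hx : ole x b) : ole x a ∨ x = b := by
  by_contra! hne
  exact h.not_between x hx1 hx2 ⟨olt_of_not_ole hne.1, olt_of_ole_of_ne hx hne.2⟩

def cell (h : IsPredecessor m n a b) : Cells m n b :=
  ⟨(⟨b.1, h.fst_lt⟩, ⟨b.2, h.snd_lt⟩), ole_refl b⟩

lemma eq_cell_of_not_ole (h : IsPredecessor m n a b) {p : Cells m n b}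
    (hp : ¬ ole ((p.1.1 : ℕ), (p.1.2 : ℕ)) a) : p = h.cell := by
  have := (h.ole_or_eq p.1.1.isLt p.1.2.isLt p.2).resolve_left hp
  rw [Prod.ext_iff] at this
  exact Cells.ext_coe this.1 this.2

lemma ole_of_add_lt (h : IsPredecessor m n a b) {x : ℕ × ℕ} (hx1 : x.1 < m) (hx2 : x.2 < n)
    (hx : x.1 + x.2 < b.1 + b.2) : ole x a := by
  refine (h.ole_or_eq hx1 hx2 (Or.inl hx)).resolve_right ?_
  rintro rfl
  omega

def leftCell (h : IsPredecessor m n a b) (hb : 0 < b.2) : Cells m n a :=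
  ⟨(⟨b.1, h.fst_lt⟩, ⟨b.2 - 1, by have := h.snd_lt; omega⟩), h.ole_of_add_lt h.fst_lt
    (by have := h.snd_lt; dsimp only; omega) (by dsimp only; omega)⟩

def topCell (h : IsPredecessor m n a b) (hb : 0 < b.1) : Cells m n a :=
  ⟨(⟨b.1 - 1, by have := h.fst_lt; omega⟩, ⟨b.2, h.snd_lt⟩), h.ole_of_add_lt
    (by have := h.fst_lt; dsimp only; omega) h.snd_lt (by dsimp only; omega)⟩

end IsPredecessor

def Cells.lift (hab : ole a b) (p : Cells m n a) : Cells m n b := ⟨p.1, ole_trans p.2 hab⟩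

def restrict (hab : ole a b) (M : Cells m n b → Tile) : Cells m n a → Tile :=
  M ∘ Cells.lift hab

def extend (N : Cells m n a → Tile) (X : Tile) (b : ℕ × ℕ) : Cells m n b → Tile :=
  fun p => if hp : ole ((p.1.1 : ℕ), (p.1.2 : ℕ)) a then N ⟨p.1, hp⟩ else X

lemma restrict_extend (hab : ole a b) (N : Cells m n a → Tile) (X : Tile) :
    restrict hab (extend N X b) = N := by
  funext p
  exact dif_pos p.2

lemma restrict_mem_quasi (hab : ole a b) {M : Cells m n b → Tile}
    (hM : M ∈ Quasi m n b.1 b.2) : restrict hab M ∈ Quasi m n a.1 a.2 := by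
  simp only [Quasi, mem_filter, mem_univ, true_and] at hM ⊢
  obtain ⟨hH, hV, hB⟩ := hM
  exact ⟨fun p q => hH (Cells.lift hab p) (Cells.lift hab q),
    fun p q => hV (Cells.lift hab p) (Cells.lift hab q), fun p => hB (Cells.lift hab p)⟩

lemma extend_apply_cell (h : IsPredecessor m n a b) (N : Cells m n a → Tile) (X : Tile) :
    extend N X b h.cell = X := by
  have := h.lt
  exact dif_neg (by unfold ole olt at *; simp only [IsPredecessor.cell]; omega)

lemma extend_restrict (h : IsPredecessor m n a b) (M : Cells m n b → Tile) :
    extend (restrict h.le M) (M h.cell) b = M := by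
  funext p
  by_cases hp : ole ((p.1.1 : ℕ), (p.1.2 : ℕ)) a
  · exact dif_pos hp
  · rw [extend, dif_neg hp, h.eq_cell_of_not_ole hp]

structure Fits (N : Cells m n a → Tile) (b : ℕ × ℕ) (X : Tile) : Prop where
  left : ∀ p : Cells m n a, (p.1.1 : ℕ) = b.1 ∧ (p.1.2 : ℕ) + 1 = b.2 → cpR (N p) = cpL X
  top : ∀ p : Cells m n a, (p.1.2 : ℕ) = b.2 ∧ (p.1.1 : ℕ) + 1 = b.1 → cpB (N p) = cpT X
  left_boundary : b.2 = 0 → cpL X = false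
  right_boundary : b.2 = n - 1 → cpR X = false
  top_boundary : b.1 = 0 → cpT X = false
  bottom_boundary : b.1 = m - 1 → cpB X = false

theorem mem_quasi_iff (h : IsPredecessor m n a b) {M : Cells m n b → Tile} :
    M ∈ Quasi m n b.1 b.2 ↔
      restrict h.le M ∈ Quasi m n a.1 a.2 ∧ Fits (restrict h.le M) b (M h.cell) := by
  refine ⟨fun hM => ⟨restrict_mem_quasi h.le hM, ?_⟩, fun ⟨hN, hX⟩ => ?_⟩ <;>
    simp only [Quasi, mem_filter, mem_univ, true_and] at *
  · obtain ⟨hH, hV, hB⟩ := hM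
    exact ⟨fun p => hH (Cells.lift h.le p) h.cell, fun p => hV (Cells.lift h.le p) h.cell,
      (hB h.cell).1, (hB h.cell).2.1, (hB h.cell).2.2.1, (hB h.cell).2.2.2⟩
  · obtain ⟨hH, hV, hB⟩ := hN
    refine ⟨fun p q hpq => ?_, fun p q hpq => ?_, fun p => ?_⟩
    · by_cases hp : ole ((p.1.1 : ℕ), (p.1.2 : ℕ)) a
      · by_cases hq : ole ((q.1.1 : ℕ), (q.1.2 : ℕ)) a
        · exact hH ⟨p.1, hp⟩ ⟨q.1, hq⟩ hpq
        · obtain rfl := h.eq_cell_of_not_ole hq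
          exact hX.left ⟨p.1, hp⟩ hpq
      · obtain rfl := h.eq_cell_of_not_ole hp
        have hq := q.2
        simp only [IsPredecessor.cell] at hpq
        unfold ole at hq
        omega
    · by_cases hp : ole ((p.1.1 : ℕ), (p.1.2 : ℕ)) a
      · by_cases hq : ole ((q.1.1 : ℕ), (q.1.2 : ℕ)) a
        · exact hV ⟨p.1, hp⟩ ⟨q.1, hq⟩ hpq
        · obtain rfl := h.eq_cell_of_not_ole hq
          exact hX.top ⟨p.1, hp⟩ hpq
      · obtain rfl := h.eq_cell_of_not_ole hp
        have hq := q.2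
        simp only [IsPredecessor.cell] at hpq
        unfold ole at hq
        omega
    · by_cases hp : ole ((p.1.1 : ℕ), (p.1.2 : ℕ)) a
      · exact hB ⟨p.1, hp⟩
      · obtain rfl := h.eq_cell_of_not_ole hp
        exact ⟨hX.left_boundary, hX.right_boundary, hX.top_boundary, hX.bottom_boundary⟩

noncomputable def fittingTiles (N : Cells m n a → Tile) (b : ℕ × ℕ) : Finset Tile := by
  classical exact univ.filter (Fits N b)

lemma mem_fittingTiles {N : Cells m n a → Tile} {X : Tile} :
    X ∈ fittingTiles N b ↔ Fits N b X := by
  classical simp [fittingTiles]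

theorem card_quasi_eq_sum (h : IsPredecessor m n a b) :
    (Quasi m n b.1 b.2).card = ∑ N ∈ Quasi m n a.1 a.2, (fittingTiles N b).card := by
  classical
  rw [card_eq_sum_card_fiberwise fun M hM => ((mem_quasi_iff h).1 hM).1]
  refine sum_congr rfl fun N hN => card_nbij' (fun M => M h.cell) (fun X => extend N X b)
    ?_ ?_ ?_ ?_
  · intro M hM
    simp only [coe_filter] at hM
    obtain ⟨hM, rfl⟩ := hM
    exact mem_fittingTiles.2 ((mem_quasi_iff h).1 hM).2
  · intro X hX
    have hres := restrict_extend h.le N X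
    simp only [coe_filter, Set.mem_ofPred_eq]
    refine ⟨(mem_quasi_iff h).2 ?_, hres⟩
    rw [hres, extend_apply_cell]
    exact ⟨hN, mem_fittingTiles.1 hX⟩
  · intro M hM
    simp only [coe_filter] at hM
    obtain ⟨-, rfl⟩ := hM
    exact extend_restrict h M
  · intro X _
    exact extend_apply_cell h N X

lemma card_filter_cpL_cpT_le_two (l t : Bool) :
    (univ.filter fun X : Tile => cpL X = l ∧ cpT X = t).card ≤ 2 := by
  revert l t; decide

lemma exists_tile_with_cpL_cpT (l t r d : Bool) (hcorner : r = true → d = true → l = t) :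
    ∃ X, cpL X = l ∧ cpT X = t ∧ (r = true → cpR X = false) ∧ (d = true → cpB X = false) := by
  revert l t r d; decide

lemma exists_left_value (N : Cells m n a → Tile) (b : ℕ × ℕ) :
    ∃ l, (∀ p : Cells m n a, (p.1.1 : ℕ) = b.1 ∧ (p.1.2 : ℕ) + 1 = b.2 → cpR (N p) = l) ∧
      (b.2 = 0 → l = false) := by
  by_cases hp : ∃ p : Cells m n a, (p.1.1 : ℕ) = b.1 ∧ (p.1.2 : ℕ) + 1 = b.2
  · obtain ⟨p, hp1, hp2⟩ := hp
    refine ⟨cpR (N p), fun q hq => ?_, by omega⟩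
    rw [Cells.ext_coe (hq.1.trans hp1.symm) (by omega)]
  · exact ⟨false, fun q hq => (hp ⟨q, hq⟩).elim, fun _ => rfl⟩

lemma exists_top_value (N : Cells m n a → Tile) (b : ℕ × ℕ) :
    ∃ t, (∀ p : Cells m n a, (p.1.2 : ℕ) = b.2 ∧ (p.1.1 : ℕ) + 1 = b.1 → cpB (N p) = t) ∧
      (b.1 = 0 → t = false) := by
  by_cases hp : ∃ p : Cells m n a, (p.1.2 : ℕ) = b.2 ∧ (p.1.1 : ℕ) + 1 = b.1
  · obtain ⟨p, hp2, hp1⟩ := hp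
    refine ⟨cpB (N p), fun q hq => ?_, by omega⟩
    rw [Cells.ext_coe (by omega) (hq.1.trans hp2.symm)]
  · exact ⟨false, fun q hq => (hp ⟨q, hq⟩).elim, fun _ => rfl⟩

namespace Fits

variable {N : Cells m n a → Tile} {X Y : Tile}

lemma cpL_eq (h : IsPredecessor m n a b) (hX : Fits N b X) (hY : Fits N b Y) :
    cpL X = cpL Y := by
  rcases Nat.eq_zero_or_pos b.2 with hb | hb
  · rw [hX.left_boundary hb, hY.left_boundary hb]
  · have hp := And.intro (rfl : b.1 = b.1) (Nat.sub_add_cancel hb)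
    exact (hX.left (h.leftCell hb) hp).symm.trans (hY.left (h.leftCell hb) hp)

lemma cpT_eq (h : IsPredecessor m n a b) (hX : Fits N b X) (hY : Fits N b Y) :
    cpT X = cpT Y := by
  rcases Nat.eq_zero_or_pos b.1 with hb | hb
  · rw [hX.top_boundary hb, hY.top_boundary hb]
  · have hp := And.intro (rfl : b.2 = b.2) (Nat.sub_add_cancel hb)
    exact (hX.top (h.topCell hb) hp).symm.trans (hY.top (h.topCell hb) hp)

end Fits

theorem card_fittingTiles_le_two (h : IsPredecessor m n a b) (N : Cells m n a → Tile) :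
    (fittingTiles N b).card ≤ 2 := by
  obtain he | ⟨X, hX⟩ := (fittingTiles N b).eq_empty_or_nonempty
  · simp [he]
  rw [mem_fittingTiles] at hX
  calc (fittingTiles N b).card
      ≤ (univ.filter fun Y : Tile => cpL Y = cpL X ∧ cpT Y = cpT X).card := by
        refine card_le_card fun Y hY => ?_
        rw [mem_fittingTiles] at hY
        simp only [mem_filter, mem_univ, true_and]
        exact ⟨hY.cpL_eq h hX, hY.cpT_eq h hX⟩
    _ ≤ 2 := card_filter_cpL_cpT_le_two _ _

def toZ2 (x : Bool) : ZMod 2 := cond x 1 0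

lemma eq_of_toZ2_add_eq_zero {x y : Bool} (h : toZ2 x + toZ2 y = 0) : x = y := by
  revert x y; decide

lemma tile_parity (X : Tile) :
    toZ2 (cpL X) + toZ2 (cpT X) + toZ2 (cpR X) + toZ2 (cpB X) = 0 := by
  cases X <;> decide

lemma sum_range_of_chain (f g : ℕ → Bool) (h0 : f 0 = false) {k : ℕ}
    (hk : ∀ j < k, g j = f (j + 1)) :
    ∑ j ∈ range (k + 1), (toZ2 (f j) + toZ2 (g j)) = toZ2 (g k) := by
  induction k with
  | zero => simp [h0, toZ2]
  | succ k ih =>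
    rw [sum_range_succ, ih fun j hj => hk j (by omega), hk k (by omega)]
    have : ∀ x y : Bool, toZ2 x + (toZ2 x + toZ2 y) = toZ2 y := by decide
    exact this _ _

lemma sum_rows_of_chain (hm : 2 ≤ m) (hn : 2 ≤ n) (f g : ℕ → ℕ → Bool)
    (hf : ∀ i, f i 0 = false) (hg : ∀ i < m - 1, g i (n - 1) = false)
    (hfg : ∀ i j, i < m → j + 1 < n → ¬(i = m - 1 ∧ j + 1 = n - 1) → g i j = f i (j + 1)) :
    ∑ i ∈ range m, ∑ j ∈ range n, (toZ2 (f i j) + toZ2 (g i j)) =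
      toZ2 (g (m - 1) (n - 2)) + (toZ2 (f (m - 1) (n - 1)) + toZ2 (g (m - 1) (n - 1))) := by
  obtain ⟨m, rfl⟩ := Nat.exists_eq_add_of_le' hm
  obtain ⟨n, rfl⟩ := Nat.exists_eq_add_of_le' hn
  simp only [Nat.add_sub_cancel, show ∀ k, k + 2 - 1 = k + 1 from fun _ => rfl] at hg hfg ⊢
  have full_row : ∀ i < m + 1, ∑ j ∈ range (n + 2), (toZ2 (f i j) + toZ2 (g i j)) = 0 := by
    intro i hi
    rw [sum_range_of_chain (f i) (g i) (hf i)
      fun j hj => hfg i j (by omega) (by omega) (by omega), hg i hi]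
    rfl
  rw [sum_range_succ, sum_eq_zero fun i hi => full_row i (mem_range.1 hi), zero_add,
    sum_range_succ, sum_range_of_chain (f (m + 1)) (g (m + 1)) (hf _)
      fun j hj => hfg _ j (by omega) (by omega) (by omega)]

theorem cpR_eq_cpB_of_corner (hm : 2 ≤ m) (hn : 2 ≤ n) (M : ℕ × ℕ → Tile)
    (hH : ∀ i j, i < m → j + 1 < n → ¬(i = m - 1 ∧ j + 1 = n - 1) →
      cpR (M (i, j)) = cpL (M (i, j + 1)))
    (hV : ∀ i j, i + 1 < m → j < n → ¬(i + 1 = m - 1 ∧ j = n - 1) →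
      cpB (M (i, j)) = cpT (M (i + 1, j)))
    (hL : ∀ i, cpL (M (i, 0)) = false) (hT : ∀ j, cpT (M (0, j)) = false)
    (hR : ∀ i < m - 1, cpR (M (i, n - 1)) = false)
    (hB : ∀ j < n - 1, cpB (M (m - 1, j)) = false) :
    cpR (M (m - 1, n - 2)) = cpB (M (m - 2, n - 1)) := by
  have rows := sum_rows_of_chain hm hn (fun i j => cpL (M (i, j))) (fun i j => cpR (M (i, j)))
    hL hR hH
  have cols := sum_rows_of_chain hn hm (fun j i => cpT (M (i, j))) (fun j i => cpB (M (i, j)))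
    hT hB fun j i hj hi hc => hV i j hi hj (by omega)
  have total : ∑ i ∈ range m, ∑ j ∈ range n, (toZ2 (cpL (M (i, j))) + toZ2 (cpT (M (i, j))) +
      toZ2 (cpR (M (i, j))) + toZ2 (cpB (M (i, j)))) = 0 :=
    sum_eq_zero fun i _ => sum_eq_zero fun j _ => tile_parity _
  rw [sum_comm] at cols
  simp only [sum_add_distrib] at rows cols total
  exact eq_of_toZ2_add_eq_zero
    (by linear_combination total - rows - cols - tile_parity (M (m - 1, n - 1)))

variable {c : ℕ × ℕ}

/-- `T1` carries no connection point, so outside the domain of `N` every boundary condition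
holds. -/
def toGrid (N : Cells m n c → Tile) (x : ℕ × ℕ) : Tile :=
  if h : x.1 < m ∧ x.2 < n ∧ ole x c then N ⟨(⟨x.1, h.1⟩, ⟨x.2, h.2.1⟩), h.2.2⟩ else .T1

lemma toGrid_apply (N : Cells m n c → Tile) (p : Cells m n c) :
    toGrid N ((p.1.1 : ℕ), (p.1.2 : ℕ)) = N p :=
  dif_pos ⟨p.1.1.isLt, p.1.2.isLt, p.2⟩

variable {N : Cells m n c → Tile}

lemma toGrid_boundary (hN : N ∈ Quasi m n c.1 c.2) (x : ℕ × ℕ) :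
    (x.2 = 0 → cpL (toGrid N x) = false) ∧ (x.2 = n - 1 → cpR (toGrid N x) = false) ∧
      (x.1 = 0 → cpT (toGrid N x) = false) ∧ (x.1 = m - 1 → cpB (toGrid N x) = false) := by
  unfold toGrid
  split_ifs with hx
  · exact (mem_filter.1 hN).2.2.2 ⟨(⟨x.1, hx.1⟩, ⟨x.2, hx.2.1⟩), hx.2.2⟩
  · exact ⟨fun _ => rfl, fun _ => rfl, fun _ => rfl, fun _ => rfl⟩

lemma toGrid_horizontal (hN : N ∈ Quasi m n c.1 c.2) {i j : ℕ} (hi : i < m) (hj : j + 1 < n)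
    (hc : ole (i, j + 1) c) : cpR (toGrid N (i, j)) = cpL (toGrid N (i, j + 1)) := by
  have hc' : ole (i, j) c := ole_trans (Or.inl (by dsimp only; omega)) hc
  rw [toGrid, dif_pos ⟨hi, by omega, hc'⟩, toGrid, dif_pos ⟨hi, hj, hc⟩]
  exact (mem_filter.1 hN).2.1 _ _ ⟨rfl, rfl⟩

lemma toGrid_vertical (hN : N ∈ Quasi m n c.1 c.2) {i j : ℕ} (hi : i + 1 < m) (hj : j < n)
    (hc : ole (i + 1, j) c) : cpB (toGrid N (i, j)) = cpT (toGrid N (i + 1, j)) := by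
  have hc' : ole (i, j) c := ole_trans (Or.inl (by dsimp only; omega)) hc
  rw [toGrid, dif_pos ⟨by omega, hj, hc'⟩, toGrid, dif_pos ⟨hi, hj, hc⟩]
  exact (mem_filter.1 hN).2.2.1 _ _ ⟨rfl, rfl⟩

theorem IsPredecessor.cpR_leftCell_eq_cpB_topCell (h : IsPredecessor m n a b) (hm : 2 ≤ m)
    (hn : 2 ≤ n) (hb1 : b.1 = m - 1) (hb2 : b.2 = n - 1) {N : Cells m n a → Tile}
    (hN : N ∈ Quasi m n a.1 a.2) :
    cpR (N (h.leftCell (by omega))) = cpB (N (h.topCell (by omega))) := by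
  have hcell {i j : ℕ} (hi : i < m) (hj : j < n) (hc : ¬(i = m - 1 ∧ j = n - 1)) :
      ole (i, j) a :=
    h.ole_of_add_lt hi hj (by dsimp only; omega)
  have key := cpR_eq_cpB_of_corner hm hn (toGrid N)
    (fun i j hi hj hc => toGrid_horizontal hN hi hj (hcell hi hj hc))
    (fun i j hi hj hc => toGrid_vertical hN hi hj (hcell hi hj hc))
    (fun i => (toGrid_boundary hN (i, 0)).1 rfl)
    (fun j => (toGrid_boundary hN (0, j)).2.2.1 rfl)
    (fun i _ => (toGrid_boundary hN (i, n - 1)).2.1 rfl)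
    (fun j _ => (toGrid_boundary hN (m - 1, j)).2.2.2 rfl)
  rw [← toGrid_apply N (h.leftCell _), ← toGrid_apply N (h.topCell _)]
  convert key using 4 <;> simp only [IsPredecessor.leftCell, IsPredecessor.topCell] <;> omega

theorem fittingTiles_nonempty (h : IsPredecessor m n a b) (hm : 2 ≤ m) (hn : 2 ≤ n)
    {N : Cells m n a → Tile} (hN : N ∈ Quasi m n a.1 a.2) : (fittingTiles N b).Nonempty := by
  obtain ⟨l, hl, hl0⟩ := exists_left_value N b
  obtain ⟨t, ht, ht0⟩ := exists_top_value N b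
  have hcorner (hb2 : decide (b.2 = n - 1) = true) (hb1 : decide (b.1 = m - 1) = true) :
      l = t := by
    rw [decide_eq_true_eq] at hb1 hb2
    have hb1' : 0 < b.1 := by omega
    have hb2' : 0 < b.2 := by omega
    rw [← hl (h.leftCell hb2') ⟨rfl, Nat.sub_add_cancel hb2'⟩,
      ← ht (h.topCell hb1') ⟨rfl, Nat.sub_add_cancel hb1'⟩]
    exact h.cpR_leftCell_eq_cpB_topCell hm hn hb1 hb2 hN
  obtain ⟨X, hXl, hXt, hXr, hXb⟩ := exists_tile_with_cpL_cpT l t _ _ hcorner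
  refine ⟨X, mem_fittingTiles.2 ⟨fun p hp => hXl ▸ hl p hp, fun p hp => hXt ▸ ht p hp,
    fun hb => hXl ▸ hl0 hb, fun hb => hXr (decide_eq_true hb), fun hb => hXt ▸ ht0 hb,
    fun hb => hXb (decide_eq_true hb)⟩⟩

end Quasimosaic

open Finset Quasimosaic

theorem quasi_growth_general (m n : ℕ) (hm : 4 ≤ m) (hn : 4 ≤ n) (a b : ℕ × ℕ)
    (hb1 : b.1 < m) (hb2 : b.2 < n)
    (hab : olt a b)
    (hpred : ∀ x : ℕ × ℕ, x.1 < m → x.2 < n → ¬(olt a x ∧ olt x b)) :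
    (Quasi m n a.1 a.2).card ≤ (Quasi m n b.1 b.2).card ∧
    (Quasi m n b.1 b.2).card ≤ 2 * (Quasi m n a.1 a.2).card := by
  have h : IsPredecessor m n a b := ⟨hb1, hb2, hab, hpred⟩
  rw [card_quasi_eq_sum h]
  constructor
  · calc (Quasi m n a.1 a.2).card = ∑ _N ∈ Quasi m n a.1 a.2, 1 := card_eq_sum_ones _
      _ ≤ _ := sum_le_sum fun N hN =>
        card_pos.2 (fittingTiles_nonempty h (by omega) (by omega) hN)
  · calc _ ≤ ∑ _N ∈ Quasi m n a.1 a.2, 2 := sum_le_sum fun N _ => card_fittingTiles_le_two h N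
      _ = 2 * (Quasi m n a.1 a.2).card := by rw [sum_const, smul_eq_mul, mul_comm]

/-- If b is the immediate successor of a in the antidiagonal order on the m×n array,
then |Q_a| ≤ |Q_b| ≤ 2·|Q_a|. -/
theorem quasi_growth (m n : ℕ) (hm : 4 ≤ m) (hn : 4 ≤ n) (a b : ℕ × ℕ)
    (ha1 : a.1 < m) (ha2 : a.2 < n) (hb1 : b.1 < m) (hb2 : b.2 < n)
    (hab : olt a b)
    (hpred : ∀ x : ℕ × ℕ, x.1 < m → x.2 < n → ¬(olt a x ∧ olt x b)) :
    (Quasi m n a.1 a.2).card ≤ (Quasi m n b.1 b.2).card ∧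
    (Quasi m n b.1 b.2).card ≤ 2 * (Quasi m n a.1 a.2).card :=
  quasi_growth_general m n hm hn a b hb1 hb2 hab hpred
end
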